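/- arXiv:2410.17793 — 3 statements merged into one kernel-verified Lean document; each statement's English description precedes it below -/
import Mathlib

section
/- Let n ≥ 1, y ∈ ℝ^n, τ ∈ [0,1] and q ∈ {1,…,n}, and set γ = y_(q), the q-th order statistic of y. Then L_τ(y, γ) + (1−τ)·Σ_{i=1}^n y_i = γ·(q − τ·n) + S_{q+1}(y). -/
open Finset

/-- The quantile (pinball) loss `ρ_τ(u)`: `τ*u` if `u ≥ 0`, `(τ-1)*u` if `u < 0`. -/
noncomputable def pinball (τ u : ℝ) : ℝ := if 0 ≤ u then τ * u else (τ - 1) * u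

/-- The `τ` sample quantile function `L_τ(y, γ) = ∑ i, ρ_τ (y i - γ)`. -/
noncomputable def sampleQuantileFn {n : ℕ} (τ : ℝ) (y : Fin n → ℝ) (γ : ℝ) : ℝ :=
  ∑ i, pinball τ (y i - γ)

/-- `orderStat y i` is the `(i+1)`-th smallest entry of `y` (i.e. the `(i+1)`-th
order statistic, with 0-indexed `i : Fin n`). -/
noncomputable def orderStat {n : ℕ} (y : Fin n → ℝ) (i : Fin n) : ℝ :=
  y (Tuple.sort y i)

/-- The `k`-sum operator `S_k(y)`: the sum of the `n - k + 1` largest entries of `y`,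
i.e. the sum of the order statistics in (1-indexed) positions `k, …, n`. -/
noncomputable def ksum {n : ℕ} (y : Fin n → ℝ) (k : ℕ) : ℝ :=
  ∑ i ∈ Finset.univ.filter (fun i : Fin n => k ≤ (i : ℕ) + 1), orderStat y i

/-- For `γ = y_(q)` the `q`-th order statistic,
`L_τ(y, γ) + (1−τ)·Σ y_i = γ·(q − τ·n) + S_{q+1}(y)`. -/
theorem stmt_1 (n : ℕ) (hn : 1 ≤ n) (y : Fin n → ℝ) (τ : ℝ) (hτ : τ ∈ Set.Icc (0:ℝ) 1)
    (q : ℕ) (hq1 : 1 ≤ q) (hq2 : q ≤ n) :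
    sampleQuantileFn τ y (orderStat y ⟨q - 1, by omega⟩) + (1 - τ) * ∑ i, y i
      = orderStat y ⟨q - 1, by omega⟩ * ((q : ℝ) - τ * n) + ksum y (q + 1) := by
  set γ := orderStat y ⟨q - 1, by omega⟩ with hγ
  have mono : Monotone (orderStat y) := Tuple.monotone_sort y
  have hsum : ∀ g : ℝ → ℝ, ∑ i, g (y i) = ∑ i, g (orderStat y i) :=
    fun g => (Equiv.sum_comp (Tuple.sort y) (fun i => g (y i))).symm
  have hpin : ∀ u : ℝ, pinball τ u = (τ - 1) * u + max u 0 := by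
    intro u; unfold pinball; rcases le_or_gt 0 u with h | h
    · rw [if_pos h, max_eq_left h]; ring
    · rw [if_neg (not_le.mpr h), max_eq_right h.le]; ring
  -- the filter set
  have hfil : Finset.univ.filter (fun i : Fin n => q + 1 ≤ (i : ℕ) + 1)
      = Finset.univ.filter (fun i : Fin n => q ≤ (i : ℕ)) := by
    apply Finset.filter_congr; intro i _; simp
  have hcard : (Finset.univ.filter (fun i : Fin n => q ≤ (i : ℕ))).card = n - q := by
    rcases eq_or_lt_of_le hq2 with h | h
    · subst h
      rw [Finset.filter_false_of_mem (fun i _ => by omega), Finset.card_empty, Nat.sub_self]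
    · have : Finset.univ.filter (fun i : Fin n => q ≤ (i : ℕ)) = Finset.Ici (⟨q, h⟩ : Fin n) := by
        ext i; simp [Fin.le_def]
      rw [this, Fin.card_Ici]
  -- max sum
  have hmax : ∑ i, max (y i - γ) 0 = ksum y (q + 1) - (n - q : ℕ) * γ := by
    rw [hsum (fun u => max (u - γ) 0), ksum, hfil]
    rw [← Finset.sum_filter_add_sum_filter_not Finset.univ (fun i : Fin n => q ≤ (i : ℕ))]
    have h1 : ∀ i ∈ Finset.univ.filter (fun i : Fin n => q ≤ (i : ℕ)),
        max (orderStat y i - γ) 0 = orderStat y i - γ := by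
      intro i hi; simp only [mem_filter] at hi
      have : γ ≤ orderStat y i := mono (by simp [Fin.le_def]; omega)
      exact max_eq_left (by linarith)
    have h2 : ∀ i ∈ Finset.univ.filter (fun i : Fin n => ¬ q ≤ (i : ℕ)),
        max (orderStat y i - γ) 0 = 0 := by
      intro i hi; simp only [mem_filter] at hi
      have : orderStat y i ≤ γ := mono (by simp [Fin.le_def]; omega)
      exact max_eq_right (by linarith)
    rw [Finset.sum_congr rfl h1, Finset.sum_congr rfl h2, Finset.sum_const, smul_zero, add_zero,
      Finset.sum_sub_distrib, Finset.sum_const, hcard, nsmul_eq_mul]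
  have hL : sampleQuantileFn τ y γ
      = (τ - 1) * (∑ i, y i) - (τ - 1) * n * γ + (ksum y (q + 1) - (n - q : ℕ) * γ) := by
    rw [sampleQuantileFn]
    rw [Finset.sum_congr rfl (fun i _ => hpin (y i - γ)), Finset.sum_add_distrib, hmax]
    congr 1
    simp only [mul_sub, Finset.sum_sub_distrib, Finset.sum_const, Finset.card_univ,
      Fintype.card_fin, nsmul_eq_mul, Finset.mul_sum]
    ring
  rw [hL]
  have hnq : ((n - q : ℕ) : ℝ) = (n : ℝ) - q := by
    have : (q:ℝ) ≤ n := by exact_mod_cast hq2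
    push_cast [Nat.cast_sub hq2]; ring
  rw [hnq]; ring
end

section
/- Let n ≥ 1, x ∈ ℝ^n and k ∈ {1,…,n}. Then S_k(x) = max{ Σ_{i=1}^n d_i·x_i : d ∈ ℝ^n, 0 ≤ d_i ≤ 1 for all i, Σ_{i=1}^n d_i = n−k+1 }, and the maximum is attained at some d with d_i ∈ {0,1} for all i. -/
open Finset

/-- `S_k(x)` is the maximum of `Σ d_i x_i` over `d ∈ [0,1]ⁿ` with
`Σ d_i = n − k + 1`, and the maximum is attained at a binary `d`. -/
theorem stmt_9 (n : ℕ) (hn : 1 ≤ n) (x : Fin n → ℝ) (k : ℕ) (hk1 : 1 ≤ k) (hk2 : k ≤ n) :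
    IsGreatest {v : ℝ | ∃ d : Fin n → ℝ, (∀ i, 0 ≤ d i ∧ d i ≤ 1) ∧
        (∑ i, d i) = (n : ℝ) - k + 1 ∧ v = ∑ i, d i * x i} (ksum x k)
      ∧ ∃ d : Fin n → ℝ, (∀ i, d i = 0 ∨ d i = 1) ∧ (∑ i, d i) = (n : ℝ) - k + 1 ∧
          ksum x k = ∑ i, d i * x i := by
  set σ := Tuple.sort x with hσ
  have hKlt : k - 1 < n := by omega
  set K : Fin n := ⟨k - 1, hKlt⟩ with hK
  set T := Finset.univ.filter (fun i : Fin n => k ≤ (i : ℕ) + 1) with hT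
  have hTIci : T = Finset.Ici K := by
    ext i
    simp only [hT, Finset.mem_filter, Finset.mem_univ, true_and, Finset.mem_Ici, Fin.le_def, hK]
    omega
  have hcard : (T.card : ℝ) = (n : ℝ) - k + 1 := by
    rw [hTIci, Fin.card_Ici]
    simp only [hK]
    push_cast [Nat.cast_sub (by omega : k - 1 ≤ n)]
    have : ((k - 1 : ℕ) : ℝ) = (k : ℝ) - 1 := by
      push_cast [Nat.cast_sub hk1]; ring
    rw [this]; ring
  -- the binary maximizer
  set d : Fin n → ℝ := fun i => if k ≤ ((σ.symm i : Fin n) : ℕ) + 1 then 1 else 0 with hd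
  have hdsum : (∑ i, d i) = (n : ℝ) - k + 1 := by
    rw [hd]
    rw [← Equiv.sum_comp σ (fun i => if k ≤ ((σ.symm i : Fin n) : ℕ) + 1 then (1:ℝ) else 0)]
    simp only [Equiv.symm_apply_apply]
    rw [Finset.sum_boole]
    simpa using hcard
  have hdval : ksum x k = ∑ i, d i * x i := by
    have : ∑ i, d i * x i
        = ∑ i, (fun j : Fin n => (if k ≤ (j : ℕ) + 1 then (1:ℝ) else 0) * x (σ j)) (σ.symm i) := by
      refine Finset.sum_congr rfl fun i _ => ?_
      simp [hd, Equiv.apply_symm_apply]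
    rw [this, Equiv.sum_comp σ.symm (fun j : Fin n => (if k ≤ (j : ℕ) + 1 then (1:ℝ) else 0) * x (σ j))]
    rw [ksum]
    rw [Finset.sum_filter]
    refine Finset.sum_congr rfl fun j _ => ?_
    by_cases h : k ≤ (j : ℕ) + 1 <;> simp [h, orderStat, hσ]
  have hdmem : ∀ i, 0 ≤ d i ∧ d i ≤ 1 := by
    intro i; rw [hd]; dsimp only; split <;> norm_num
  refine ⟨⟨⟨d, hdmem, hdsum, hdval⟩, ?_⟩, d,
    fun i => by rw [hd]; dsimp only; split <;> simp, hdsum, hdval⟩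
  rintro v ⟨e, he, hesum, rfl⟩
  set t := x (σ K) with ht
  have hmono := Tuple.monotone_sort x
  have key : ∀ i, e i * x i ≤ e i * t + max (x i - t) 0 := by
    intro i
    rcases le_or_gt t (x i) with h | h
    · nlinarith [(he i).1, (he i).2, le_max_left (x i - t) 0]
    · nlinarith [(he i).1, (he i).2, le_max_right (x i - t) 0]
  have hmax : ∑ i, max (x (σ i) - t) 0 = ksum x k - ((n : ℝ) - k + 1) * t := by
    have h1 : ∑ i, max (x (σ i) - t) 0 = ∑ i ∈ T, (x (σ i) - t) := by
      rw [Finset.sum_filter]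
      refine Finset.sum_congr rfl fun j _ => ?_
      by_cases h : k ≤ (j : ℕ) + 1
      · have hKj : K ≤ j := by rw [Fin.le_def]; simp [hK]; omega
        have h2 : t ≤ x (σ j) := hmono hKj
        rw [if_pos h, max_eq_left (by linarith)]
      · have hjK : j ≤ K := by rw [Fin.le_def]; simp [hK]; omega
        have h2 : x (σ j) ≤ t := hmono hjK
        rw [if_neg h, max_eq_right (by linarith)]
    rw [h1, Finset.sum_sub_distrib, Finset.sum_const, nsmul_eq_mul, hcard]
    rw [ksum]
    congr 1
  calc ∑ i, e i * x i ≤ ∑ i, (e i * t + max (x i - t) 0) :=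
        Finset.sum_le_sum fun i _ => key i
    _ = (∑ i, e i) * t + ∑ i, max (x i - t) 0 := by
        rw [Finset.sum_add_distrib, ← Finset.sum_mul]
    _ = ((n : ℝ) - k + 1) * t + ∑ i, max (x (σ i) - t) 0 := by
        rw [hesum, ← Equiv.sum_comp σ (fun j => max (x j - t) 0)]
    _ = ksum x k := by rw [hmax]; ring
end

section
/- Let n ≥ 1, x ∈ ℝ^n and k ∈ {1,…,n}. Then S_k(x) = min{ (n−k+1)·t + Σ_{i=1}^n v_i : t ∈ ℝ, v ∈ ℝ^n, v_i ≥ 0 and t + v_i ≥ x_i for all i }. Moreover, if x_i ≥ 0 for all i, then the minimum is attained at some feasible (t, v) with t ≥ 0. -/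
open Finset

lemma card_filt (n k : ℕ) (hk1 : 1 ≤ k) (hk2 : k ≤ n) :
    (Finset.univ.filter (fun i : Fin n => k ≤ (i : ℕ) + 1)).card = n - k + 1 := by
  rw [Finset.card_filter,
    Fin.sum_univ_eq_sum_range (fun i => if k ≤ i + 1 then 1 else 0), ← Finset.card_filter]
  have : (Finset.range n).filter (fun i => k ≤ i + 1) = Finset.Ico (k-1) n := by
    ext i; simp [Finset.mem_Ico]; omega
  rw [this, Nat.card_Ico]; omega

/-- `S_k(x)` is the minimum of `(n−k+1)·t + Σ v_i` over `t ∈ ℝ`,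
`v ≥ 0` with `t + v_i ≥ x_i` for all `i`; if moreover `x ≥ 0`, the minimum is
attained at some feasible `(t, v)` with `t ≥ 0`. -/
theorem stmt_10 (n : ℕ) (hn : 1 ≤ n) (x : Fin n → ℝ) (k : ℕ) (hk1 : 1 ≤ k) (hk2 : k ≤ n) :
    IsLeast {w : ℝ | ∃ (t : ℝ) (v : Fin n → ℝ), (∀ i, 0 ≤ v i) ∧
        (∀ i, x i ≤ t + v i) ∧ w = ((n : ℝ) - k + 1) * t + ∑ i, v i} (ksum x k)
      ∧ ((∀ i, 0 ≤ x i) → ∃ (t : ℝ) (v : Fin n → ℝ), 0 ≤ t ∧ (∀ i, 0 ≤ v i) ∧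
          (∀ i, x i ≤ t + v i) ∧ ksum x k = ((n : ℝ) - k + 1) * t + ∑ i, v i) := by
  set σ := Tuple.sort x with hσ
  set F := Finset.univ.filter (fun i : Fin n => k ≤ (i : ℕ) + 1) with hF
  have hcard : (F.card : ℝ) = (n : ℝ) - k + 1 := by
    rw [hF, card_filt n k hk1 hk2]
    have h : n - k + 1 = n + 1 - k := by omega
    rw [h, Nat.cast_sub (by omega)]; push_cast; ring
  set j : Fin n := ⟨k - 1, by omega⟩ with hj
  have hmono : Monotone (x ∘ σ) := Tuple.monotone_sort x
  set t₀ : ℝ := x (σ j) with ht₀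
  -- membership
  have hmem : ∃ (t : ℝ) (v : Fin n → ℝ), (∀ i, 0 ≤ v i) ∧
      (∀ i, x i ≤ t + v i) ∧ ksum x k = ((n : ℝ) - k + 1) * t + ∑ i, v i ∧ t = t₀ := by
    refine ⟨t₀, fun i => max (x i - t₀) 0, fun i => le_max_right _ _, fun i => by
      have := le_max_left (x i - t₀) 0; linarith, ?_, rfl⟩
    have hsum : ∑ i, max (x i - t₀) 0 = ∑ i, max (x (σ i) - t₀) 0 :=
      (Equiv.sum_comp σ fun i => max (x i - t₀) 0).symm
    have hsplit : ∑ i, max (x (σ i) - t₀) 0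
        = ∑ i ∈ F, max (x (σ i) - t₀) 0 + ∑ i ∈ Fᶜ, max (x (σ i) - t₀) 0 :=
      (Finset.sum_add_sum_compl F _).symm
    have h1 : ∑ i ∈ F, max (x (σ i) - t₀) 0 = ∑ i ∈ F, (x (σ i) - t₀) := by
      apply Finset.sum_congr rfl
      intro i hi
      rw [hF, Finset.mem_filter] at hi
      have hji : j ≤ i := by
        rw [hj, Fin.le_def]; simp only []; omega
      have := hmono hji
      simp only [Function.comp] at this
      rw [max_eq_left]; linarith
    have h2 : ∑ i ∈ Fᶜ, max (x (σ i) - t₀) 0 = 0 := by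
      apply Finset.sum_eq_zero
      intro i hi
      rw [hF, Finset.compl_filter, Finset.mem_filter] at hi
      have hij : i ≤ j := by
        rw [hj, Fin.le_def]; simp only []; omega
      have := hmono hij
      simp only [Function.comp] at this
      rw [max_eq_right]; linarith
    rw [hsum, hsplit, h1, h2, Finset.sum_sub_distrib, Finset.sum_const, nsmul_eq_mul, hcard]
    unfold ksum orderStat
    ring
  obtain ⟨t, v, hv0, hxv, hkeq, htt⟩ := hmem
  refine ⟨⟨⟨t, v, hv0, hxv, hkeq⟩, ?_⟩, ?_⟩
  · -- lower bound
    rintro w ⟨s, u, hu0, hxu, rfl⟩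
    have key : ∑ i ∈ F, x (σ i) ≤ (F.card : ℝ) * s + ∑ i, u i := by
      calc ∑ i ∈ F, x (σ i) ≤ ∑ i ∈ F, (s + u (σ i)) :=
            Finset.sum_le_sum fun i _ => hxu (σ i)
        _ = (F.card : ℝ) * s + ∑ i ∈ F, u (σ i) := by
            rw [Finset.sum_add_distrib, Finset.sum_const, nsmul_eq_mul]
        _ ≤ (F.card : ℝ) * s + ∑ i, u i := by
            have : ∑ i ∈ F, u (σ i) = ∑ i ∈ F.image σ, u i := by
              rw [Finset.sum_image]
              intro a _ b _ hab; exact σ.injective hab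
            have hsub := Finset.sum_le_sum_of_subset_of_nonneg
              (Finset.subset_univ (F.image σ)) (fun i _ _ => hu0 i)
            rw [this]; linarith
    rw [hcard] at key
    exact key
  · intro hx
    exact ⟨t, v, by rw [htt, ht₀]; exact hx _, hv0, hxv, hkeq⟩
end
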